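/- arXiv:1806.11042 — 7 statements merged into one kernel-verified Lean document; each statement's English description precedes it below -/
import Mathlib

section
/- Let A be a real skew-symmetric d×d matrix and let f : ℝ^d → ℂ be A-positive. Then for all ζ₁, ζ₂ ∈ ℝ^d one has |f(ζ₁) − f(ζ₂)|² ≤ 4 · Re(f(0)) · |f(0) − f(ζ₂ − ζ₁) · exp((i/2) · ζ₁ᵀ A ζ₂)|. -/
open scoped ComplexOrder Matrix

/-- A function `f : ℝ^d → ℂ` is `A`-positive (for a real skew-symmetric matrix `A`) if for
every finite collection of vectors `ξ 0, …, ξ (N-1)` the `N × N` matrix with entries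
`f (ξ μ - ξ ν) * exp ((i/2) * ξ μ ᵀ A ξ ν)` is positive semidefinite. -/
def APos {d : ℕ} (A : Matrix (Fin d) (Fin d) ℝ) (f : (Fin d → ℝ) → ℂ) : Prop :=
  ∀ (N : ℕ) (ξ : Fin N → Fin d → ℝ),
    (Matrix.of fun μ ν : Fin N =>
      f (ξ μ - ξ ν) * Complex.exp (Complex.I / 2 * ((ξ μ ⬝ᵥ A.mulVec (ξ ν) : ℝ) : ℂ))).PosSemidef

/-!
Apply `A`-positivity to the three points `0, -ζ₁, -ζ₂`. The resulting positive semidefinite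
matrix has `f 0` on the diagonal (skew-symmetry kills the phases there), `f ζ₁`, `f ζ₂` in the
first row and `g = f (ζ₂ - ζ₁) * exp ((i/2) ζ₁ᵀ A ζ₂)` in position `(1, 2)`. Cauchy–Schwarz for the
semi-inner product it defines, applied to `e₀` and `e₁ - e₂`, gives
`|f ζ₁ - f ζ₂|² ≤ Re f 0 · (2 Re f 0 - 2 Re g) ≤ 2 Re f 0 · |f 0 - g|`.
-/

namespace Matrix

variable {𝕜 n : Type*} [RCLike 𝕜] [Fintype n]

theorem PosSemidef.norm_dotProduct_mulVec_sq_le {M : Matrix n n 𝕜} (hM : M.PosSemidef)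
    (x y : n → 𝕜) :
    ‖star x ⬝ᵥ M *ᵥ y‖ ^ 2 ≤ RCLike.re (star x ⬝ᵥ M *ᵥ x) * RCLike.re (star y ⬝ᵥ M *ᵥ y) := by
  let := M.toSeminormedAddCommGroup hM
  let := M.toInnerProductSpace hM
  have h := inner_mul_inner_self_le (𝕜 := 𝕜) x y
  rw [norm_inner_symm y x, ← sq] at h
  simp only [dotProduct_comm (star _)]
  exact h

theorem PosSemidef.norm_sub_sq_le [DecidableEq n] {M : Matrix n n 𝕜} (hM : M.PosSemidef)
    (i j k : n) :
    ‖M i j - M i k‖ ^ 2 ≤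
      RCLike.re (M i i) * (RCLike.re (M j j) + RCLike.re (M k k) - 2 * RCLike.re (M j k)) := by
  have h := hM.norm_dotProduct_mulVec_sq_le (Pi.single i 1) (Pi.single j 1 - Pi.single k 1)
  have hkj : M k j = star (M j k) := (hM.isHermitian.apply k j).symm
  simp only [star_sub, Pi.star_single, star_one, mulVec_sub, mulVec_single_one,
    single_one_dotProduct, sub_dotProduct, dotProduct_sub, col_apply, hkj, map_sub,
    RCLike.star_def, RCLike.conj_re] at h
  convert h using 2
  ring

theorem dotProduct_mulVec_self_eq_zero_of_transpose_eq_neg {R : Type*} [CommRing R]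
    [IsAddTorsionFree R] {A : Matrix n n R} (hA : Aᵀ = -A) (v : n → R) : v ⬝ᵥ A *ᵥ v = 0 := by
  rw [← self_eq_neg]
  conv_lhs => rw [dotProduct_mulVec, ← mulVec_transpose, hA, neg_mulVec, neg_dotProduct,
    dotProduct_comm]

end Matrix

theorem stmt_4 {d : ℕ} (A : Matrix (Fin d) (Fin d) ℝ) (hA : Aᵀ = -A)
    (f : (Fin d → ℝ) → ℂ) (hf : APos A f) :
    ∀ ζ₁ ζ₂ : Fin d → ℝ,
      ‖f ζ₁ - f ζ₂‖ ^ 2 ≤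
        4 * (f 0).re *
          ‖f 0 -
            f (ζ₂ - ζ₁) * Complex.exp (Complex.I / 2 * ((ζ₁ ⬝ᵥ A.mulVec ζ₂ : ℝ) : ℂ))‖ := by
  intro ζ₁ ζ₂
  set g := f (ζ₂ - ζ₁) * Complex.exp (Complex.I / 2 * ((ζ₁ ⬝ᵥ A.mulVec ζ₂ : ℝ) : ℂ))
  have hM := hf 3 ![0, -ζ₁, -ζ₂]
  have hf0 : 0 ≤ (f 0).re := (Complex.nonneg_iff.mp (by simpa using hM.diag_nonneg (i := 0))).1
  have hCS : ‖f ζ₁ - f ζ₂‖ ^ 2 ≤ (f 0).re * (2 * (f 0).re - 2 * g.re) := by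
    have h := hM.norm_sub_sq_le 0 1 2
    have h12 : f (-ζ₁ - -ζ₂) * Complex.exp (Complex.I / 2 * ((-ζ₁ ⬝ᵥ A *ᵥ -ζ₂ : ℝ) : ℂ)) = g := by
      rw [neg_sub_neg, Matrix.mulVec_neg, dotProduct_neg, neg_dotProduct, neg_neg]
    simp only [Matrix.of_apply, Matrix.cons_val_zero, Matrix.cons_val_one, Matrix.cons_val_two,
      Matrix.tail_cons, Matrix.head_cons, h12] at h
    simp only [sub_self, sub_neg_eq_add, zero_add, zero_dotProduct, Matrix.mulVec_zero,
      dotProduct_zero, Matrix.dotProduct_mulVec_self_eq_zero_of_transpose_eq_neg hA,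
      Complex.ofReal_zero, mul_zero, Complex.exp_zero, mul_one, RCLike.re_to_complex] at h
    linarith
  have hg : (f 0).re - g.re ≤ ‖f 0 - g‖ := by simpa using Complex.re_le_norm (f 0 - g)
  nlinarith [norm_nonneg (f 0 - g)]
end

section
/- Let A be a real skew-symmetric d×d matrix and let f : ℝ^d → ℂ be A-positive. If f is continuous at the origin 0 ∈ ℝ^d, then f is continuous at every point of ℝ^d. -/
open scoped ComplexOrder Matrix

open Filter Topology

/-! Regard `f` through the kernel `K ξ η = f (ξ - η) * exp ((i/2) ξᵀ A η)`, so that `A`-positivity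
says that `K` is a positive semidefinite kernel and `f = K · 0`. Realising the Gram matrix of
`K` at three points `z, x, y` as an inner product, Cauchy–Schwarz applied to `e_x - e_y` and `e_z`
gives `‖K x z - K y z‖² ≤ Re K(z,z) · Re (K(x,x) + K(y,y) - K(x,y) - K(y,x))`. Continuity of `f`
at `0` makes the right-hand side tend to `0` as `y → x`, since each of the four kernel values
there is `f` near `0` times a continuous phase. -/

theorem Matrix.PosSemidef.norm_sub_sq_le_s5 {𝕜 n : Type*} [RCLike 𝕜] [Fintype n] [DecidableEq n]
    {M : Matrix n n 𝕜} (hM : M.PosSemidef) (i j k : n) :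
    ‖M j i - M k i‖ ^ 2 ≤ RCLike.re (M i i) * RCLike.re (M j j + M k k - M j k - M k j) := by
  let _ := M.toSeminormedAddCommGroup hM
  let _ := M.toInnerProductSpace hM
  set x : n → 𝕜 := Pi.single i 1
  set y : n → 𝕜 := Pi.single j 1 - Pi.single k 1
  have hinner (u v : n → 𝕜) : inner 𝕜 u v = (M *ᵥ v) ⬝ᵥ star u := rfl
  have hyx : inner 𝕜 y x = M j i - M k i := by simp [hinner, x, y]
  have hxy : inner 𝕜 x y = star (M j i - M k i) := by
    rw [hinner, star_sub, hM.isHermitian.apply, hM.isHermitian.apply]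
    simp [x, y, Matrix.mulVec_sub]
  have hxx : inner 𝕜 x x = M i i := by rw [hinner]; simp [x]
  have hyy : inner 𝕜 y y = M j j + M k k - M j k - M k j := by
    rw [hinner]
    simp only [y, mulVec_sub, mulVec_single, MulOpposite.op_one, one_smul, star_sub,
      Pi.star_single, star_one, dotProduct_sub, dotProduct_single, Pi.sub_apply, col_apply, mul_one]
    ring
  have hcs := inner_mul_inner_self_le (𝕜 := 𝕜) y x
  rwa [hyx, hxy, hxx, hyy, norm_star, ← sq, mul_comm] at hcs

def IsPosSemidefKernel {X 𝕜 : Type*} [RCLike 𝕜] (K : X → X → 𝕜) : Prop :=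
  ∀ (N : ℕ) (ξ : Fin N → X), (Matrix.of fun μ ν => K (ξ μ) (ξ ν)).PosSemidef

namespace IsPosSemidefKernel

variable {X 𝕜 : Type*} [RCLike 𝕜] {K : X → X → 𝕜}

theorem norm_sub_sq_le_s5 (hK : IsPosSemidefKernel K) (x y z : X) :
    ‖K x z - K y z‖ ^ 2 ≤ RCLike.re (K z z) * RCLike.re (K x x + K y y - K x y - K y x) :=
  (hK 3 ![z, x, y]).norm_sub_sq_le_s5 0 1 2

theorem continuousAt_left [TopologicalSpace X] (hK : IsPosSemidefKernel K) {x : X}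
    (hdiag : ContinuousAt (fun y => K y y) x) (hleft : ContinuousAt (fun y => K y x) x)
    (hright : ContinuousAt (K x) x) (z : X) :
    ContinuousAt (fun y => K y z) x := by
  have hbound : Tendsto (fun y => RCLike.re (K z z) * RCLike.re (K x x + K y y - K x y - K y x))
      (𝓝 x) (𝓝 0) := by
    have h := (((tendsto_const_nhds (x := K x x)).add hdiag.tendsto).sub hright.tendsto).sub
      hleft.tendsto
    simpa using ((RCLike.continuous_re.tendsto _).comp h).const_mul (RCLike.re (K z z))
  rw [ContinuousAt, tendsto_iff_norm_sub_tendsto_zero]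
  refine squeeze_zero (fun _ => norm_nonneg _) (fun y => ?_) (hbound.sqrt.trans (by simp))
  rw [norm_sub_rev]
  exact Real.le_sqrt_of_sq_le (hK.norm_sub_sq_le_s5 x y z)

end IsPosSemidefKernel

noncomputable def twistedKernel {d : ℕ} (A : Matrix (Fin d) (Fin d) ℝ) (f : (Fin d → ℝ) → ℂ)
    (ξ η : Fin d → ℝ) : ℂ :=
  f (ξ - η) * Complex.exp (Complex.I / 2 * ((ξ ⬝ᵥ A *ᵥ η : ℝ) : ℂ))

section TwistedKernel

variable {d : ℕ} {A : Matrix (Fin d) (Fin d) ℝ} {f : (Fin d → ℝ) → ℂ}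

theorem APos.isPosSemidefKernel (hf : APos A f) : IsPosSemidefKernel (twistedKernel A f) := hf

@[simp]
theorem twistedKernel_zero_right (ξ : Fin d → ℝ) : twistedKernel A f ξ 0 = f ξ := by
  simp [twistedKernel]

theorem ContinuousAt.twistedKernel {X : Type*} [TopologicalSpace X] {u v : X → Fin d → ℝ}
    {x : X} (hf : ContinuousAt f (u x - v x)) (hu : ContinuousAt u x) (hv : ContinuousAt v x) :
    ContinuousAt (fun y => twistedKernel A f (u y) (v y)) x := by
  have hphase : Continuous fun p : (Fin d → ℝ) × (Fin d → ℝ) => p.1 ⬝ᵥ A *ᵥ p.2 :=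
    continuous_fst.dotProduct (continuous_const.matrix_mulVec continuous_snd)
  have hexp : ContinuousAt
      (fun y => Complex.exp (Complex.I / 2 * ((u y ⬝ᵥ A *ᵥ v y : ℝ) : ℂ))) x :=
    Complex.continuous_exp.continuousAt.comp <| continuousAt_const.mul <|
      Complex.continuous_ofReal.continuousAt.comp <| hphase.continuousAt.comp (hu.prodMk hv)
  exact (ContinuousAt.comp (f := fun y => u y - v y) hf (hu.sub hv)).mul hexp

end TwistedKernel

theorem stmt_5_general {d : ℕ} (A : Matrix (Fin d) (Fin d) ℝ)
    (f : (Fin d → ℝ) → ℂ) (hf : APos A f)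
    (h0 : ContinuousAt f 0) :
    ∀ x : Fin d → ℝ, ContinuousAt f x := by
  intro x
  have hf_near_zero : ContinuousAt f (x - x) := by rwa [sub_self]
  simpa using hf.isPosSemidefKernel.continuousAt_left
    (hf_near_zero.twistedKernel continuousAt_id continuousAt_id)
    (hf_near_zero.twistedKernel continuousAt_id continuousAt_const)
    (hf_near_zero.twistedKernel continuousAt_const continuousAt_id) 0

theorem stmt_5 {d : ℕ} (A : Matrix (Fin d) (Fin d) ℝ) (hA : Aᵀ = -A)
    (f : (Fin d → ℝ) → ℂ) (hf : APos A f)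
    (h0 : ContinuousAt f 0) :
    ∀ x : Fin d → ℝ, ContinuousAt f x :=
  stmt_5_general A f hf h0
end

section
/- Let V be a real symmetric d×d matrix and A a real skew-symmetric d×d matrix. The Gaussian function f : ℝ^d → ℂ defined by f(ξ) = exp(−(1/4) · ξᵀ V ξ) is A-positive if and only if the complex d×d matrix V + i·A (i.e. the real matrix V regarded as complex plus i times the real matrix A regarded as complex) is positive semidefinite. -/
open scoped ComplexOrder Matrix

/-!
Writing `M = V + iA` and completing the square with `Vᵀ = V`, the exponent of the `(μ, ν)` entry
of the matrix in `APos` is `a μ + a ν + ½ ξ_μᵀ M ξ_ν` with `a μ = -¼ ξ_μᵀ V ξ_μ` real.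

If `M ≥ 0`, the Gram matrix `(ξ_μᵀ M ξ_ν)` is positive semidefinite, hence so is its entrywise
exponential (a limit of sums of Hadamard powers, by the Schur product theorem), and the factors
`exp (a μ)` only conjugate it by a real diagonal matrix.

Conversely, replacing `ξ` by `√t • ξ` multiplies the exponent matrix `B` by `t`, so `c* exp(t B) c`
is nonnegative for `t > 0`; if `∑ c = 0` it vanishes at `t = 0`, and its derivative there gives
`Re (c* B c) ≥ 0`. The terms `a μ + a ν` drop out of `c* B c`, and the points `Re z, Im z, 0` with
coefficients `1, i, -(1 + i)` turn `c* B c` into `½ z* M z`.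
-/

open Complex Matrix
open scoped Nat

lemma nonneg_of_hasDerivAt_of_nonneg_right {f : ℝ → ℝ} {f' : ℝ} (hf : HasDerivAt f f' 0)
    (h0 : f 0 = 0) (h : ∀ t, 0 < t → 0 ≤ f t) : 0 ≤ f' := by
  refine ge_of_tendsto hf.tendsto_slope_zero_right ?_
  filter_upwards [self_mem_nhdsWithin] with t (ht : 0 < t)
  simpa [h0] using mul_nonneg (inv_nonneg.mpr ht.le) (h t ht)

namespace Matrix

lemma isHermitian_map_ofReal_add_I_smul {n : Type*} {V A : Matrix n n ℝ} (hV : V.IsSymm)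
    (hA : Aᵀ = -A) : (V.map ofReal + I • A.map ofReal).IsHermitian := by
  ext i j
  have hA' : A j i = -A i j := by simpa using congr_fun (congr_fun hA i) j
  simp [hV.apply, hA']

variable {m n : Type*} [Fintype n]

lemma dotProduct_mulVec_eq_sum {R : Type*} [CommSemiring R] (x y : n → R)
    (M : Matrix n n R) : x ⬝ᵥ M *ᵥ y = ∑ i, ∑ j, x i * M i j * y j := by
  simp only [dotProduct, mulVec, Finset.mul_sum, mul_assoc]

lemma mul_mul_conjTranspose_apply {α : Type*} [CommSemiring α] [StarRing α]
    (P : Matrix m n α) (B : Matrix n n α) (i j : m) :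
    (P * B * Pᴴ) i j = P i ⬝ᵥ B *ᵥ star (P j) := by
  rw [Matrix.mul_assoc]
  simp [mul_apply, dotProduct, mulVec]

lemma star_dotProduct_mul_mul_conjTranspose_mulVec {α : Type*} [CommSemiring α] [StarRing α]
    [Fintype m] (P : Matrix m n α) (B : Matrix n n α) (c : m → α) :
    star c ⬝ᵥ (P * B * Pᴴ) *ᵥ c = star (Pᴴ *ᵥ c) ⬝ᵥ B *ᵥ (Pᴴ *ᵥ c) := by
  simp [← mulVec_mulVec, dotProduct_mulVec, star_mulVec]

lemma IsHermitian.posSemidef_of_re_nonneg {𝕜 : Type*} [RCLike 𝕜] {M : Matrix n n 𝕜}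
    (hM : M.IsHermitian) (h : ∀ x, 0 ≤ RCLike.re (star x ⬝ᵥ M *ᵥ x)) : M.PosSemidef :=
  .of_dotProduct_mulVec_nonneg hM fun x =>
    RCLike.nonneg_iff.mpr ⟨h x, hM.im_star_dotProduct_mulVec_self x⟩

lemma PosSemidef.map_pow {𝕜 : Type*} [RCLike 𝕜] {G : Matrix n n 𝕜} (hG : G.PosSemidef)
    (k : ℕ) : (G.map (· ^ k)).PosSemidef := by
  induction k with
  | zero =>
    convert posSemidef_vecMulVec_self_star (fun _ : n => (1 : 𝕜)) using 1
    ext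
    simp [vecMulVec]
  | succ k ih =>
    convert ih.hadamard hG using 1
    ext
    simp [pow_succ]

lemma PosSemidef.map_exp {G : Matrix n n ℂ} (hG : G.PosSemidef) : (G.map exp).PosSemidef := by
  refine .of_dotProduct_mulVec_nonneg ?_ fun x => ?_
  · ext i j
    simp [← hG.isHermitian.apply i j]
  have hexp : ∀ z : ℂ, HasSum (fun k : ℕ => (k !⁻¹ : ℂ) * z ^ k) (exp z) := fun z => by
    simpa [exp_eq_exp_ℂ] using NormedSpace.exp_series_hasSum_exp' (𝕂 := ℂ) z
  have hsum : HasSum (fun k : ℕ => (k !⁻¹ : ℂ) * (star x ⬝ᵥ G.map (· ^ k) *ᵥ x))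
      (star x ⬝ᵥ G.map exp *ᵥ x) := by
    simp only [dotProduct_mulVec_eq_sum, Finset.mul_sum, map_apply]
    refine hasSum_sum fun i _ => hasSum_sum fun j _ => ?_
    simpa only [mul_assoc, mul_left_comm] using
      ((hexp (G i j)).mul_left (star x i)).mul_right (x j)
  exact hsum.nonneg fun k =>
    mul_nonneg (by positivity) ((hG.map_pow k).dotProduct_mulVec_nonneg x)

lemma PosSemidef.map_exp_add_add {G : Matrix n n ℂ} (hG : G.PosSemidef) (a : n → ℝ) :
    (((of fun i j => (a i + a j : ℂ)) + G).map exp).PosSemidef := by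
  classical
  have h : ((of fun i j => (a i + a j : ℂ)) + G).map exp =
      diagonal (fun i => exp (a i)) * G.map exp * (diagonal fun i => exp (a i))ᴴ := by
    ext i j
    simp only [map_apply, add_apply, of_apply, exp_add, diagonal_conjTranspose, diagonal_mul,
      mul_diagonal, Pi.star_apply, star_def]
    rw [← Complex.exp_conj, conj_ofReal]
    ring
  rw [h]
  exact hG.map_exp.mul_mul_conjTranspose_same _

lemma star_dotProduct_add_add_mulVec_of_sum_eq_zero (a : n → ℂ) (G : Matrix n n ℂ)
    {c : n → ℂ} (hc : ∑ i, c i = 0) :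
    star c ⬝ᵥ ((of fun i j => a i + a j) + G) *ᵥ c = star c ⬝ᵥ G *ᵥ c := by
  have hc' : ∑ i, starRingEnd ℂ (c i) = 0 := by rw [← map_sum, hc, map_zero]
  simp [dotProduct, mulVec, mul_add, add_mul, Finset.sum_add_distrib, ← Finset.mul_sum,
    ← Finset.sum_mul, hc, hc']

lemma re_star_dotProduct_mulVec_nonneg_of_posSemidef_map_exp {B : Matrix n n ℂ}
    (hB : ∀ t : ℝ, 0 < t → (((t : ℂ) • B).map exp).PosSemidef) {c : n → ℂ}
    (hc : ∑ i, c i = 0) : 0 ≤ (star c ⬝ᵥ B *ᵥ c).re := by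
  set g : ℝ → ℂ := fun t => star c ⬝ᵥ ((t : ℂ) • B).map exp *ᵥ c
  have hderiv : HasDerivAt g (star c ⬝ᵥ B *ᵥ c) 0 := by
    simp only [g, dotProduct_mulVec_eq_sum, map_apply, Matrix.smul_apply, smul_eq_mul]
    refine HasDerivAt.fun_sum fun i _ => HasDerivAt.fun_sum fun j _ => ?_
    simpa using (((hasDerivAt_id (0 : ℂ)).mul_const (B i j)).cexp.comp_ofReal.const_mul
      (star c i)).mul_const (c j)
  have hg0 : g 0 = 0 := by
    simp [g, dotProduct_mulVec_eq_sum, ← Finset.mul_sum, hc]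
  exact nonneg_of_hasDerivAt_of_nonneg_right (reCLM.hasFDerivAt.comp_hasDerivAt 0 hderiv)
    (by simp [hg0]) fun t ht => (hB t ht).re_dotProduct_nonneg c

end Matrix

lemma Complex.ofReal_dotProduct_mulVec {n : Type*} [Fintype n] (a b : n → ℝ) (B : Matrix n n ℝ) :
    ((a ⬝ᵥ B *ᵥ b : ℝ) : ℂ) = (ofReal ∘ a) ⬝ᵥ B.map ofReal *ᵥ (ofReal ∘ b) := by
  simp [dotProduct, mulVec]

lemma exists_sum_eq_zero_conjTranspose_mulVec_eq {d : ℕ} (z : Fin d → ℂ) :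
    ∃ (ξ : Fin 3 → Fin d → ℝ) (c : Fin 3 → ℂ), ∑ μ, c μ = 0 ∧ ((of ξ).map ofReal)ᴴ *ᵥ c = z :=
  ⟨![fun i => (z i).re, fun i => (z i).im, 0], ![1, I, -(1 + I)], by simp [Fin.sum_univ_three],
    by ext i; simp [mulVec, dotProduct, Fin.sum_univ_three, re_add_im]⟩

section Gaussian

variable {d N : ℕ} (V A : Matrix (Fin d) (Fin d) ℝ)

noncomputable def gaussianPhaseExponent (ξ : Fin N → Fin d → ℝ) : Matrix (Fin N) (Fin N) ℂ :=
  of fun μ ν => -(1 / 4 : ℂ) * (((ξ μ - ξ ν) ⬝ᵥ V *ᵥ (ξ μ - ξ ν) : ℝ) : ℂ) +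
    I / 2 * ((ξ μ ⬝ᵥ A *ᵥ ξ ν : ℝ) : ℂ)

lemma aPos_gaussian_iff :
    APos A (fun ξ => exp (-(1 / 4 : ℂ) * ((ξ ⬝ᵥ V *ᵥ ξ : ℝ) : ℂ))) ↔
      ∀ N (ξ : Fin N → Fin d → ℝ), ((gaussianPhaseExponent V A ξ).map exp).PosSemidef := by
  refine forall₂_congr fun N ξ => ?_
  rw [iff_eq_eq]
  congr 1
  ext μ ν
  simp [gaussianPhaseExponent, exp_add]

lemma gaussianPhaseExponent_sqrt_smul (ξ : Fin N → Fin d → ℝ) {t : ℝ} (ht : 0 ≤ t) :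
    gaussianPhaseExponent V A (√t • ξ) = (t : ℂ) • gaussianPhaseExponent V A ξ := by
  ext μ ν
  have hs : (√t : ℂ) * √t = t := by exact_mod_cast Real.mul_self_sqrt ht
  simp only [gaussianPhaseExponent, of_apply, Pi.smul_apply, ← smul_sub, smul_dotProduct,
    mulVec_smul, dotProduct_smul, smul_eq_mul, Matrix.smul_apply]
  push_cast
  linear_combination (-(1 / 4) * (((ξ μ - ξ ν) ⬝ᵥ V *ᵥ (ξ μ - ξ ν) : ℝ) : ℂ) +
    I / 2 * ((ξ μ ⬝ᵥ A *ᵥ ξ ν : ℝ) : ℂ)) * hs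

lemma gaussianPhaseExponent_eq (hV : V.IsSymm) (ξ : Fin N → Fin d → ℝ) :
    gaussianPhaseExponent V A ξ =
      (of fun μ ν => ((-(ξ μ ⬝ᵥ V *ᵥ ξ μ) / 4 : ℝ) : ℂ) + ((-(ξ ν ⬝ᵥ V *ᵥ ξ ν) / 4 : ℝ) : ℂ)) +
        (1 / 2 : ℂ) • ((of ξ).map ofReal * (V.map ofReal + I • A.map ofReal) *
          ((of ξ).map ofReal)ᴴ) := by
  ext μ ν
  have hsymm : ξ ν ⬝ᵥ V *ᵥ ξ μ = ξ μ ⬝ᵥ V *ᵥ ξ ν := by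
    rw [dotProduct_mulVec, ← mulVec_transpose, hV.eq, dotProduct_comm]
  have hrow : (of ξ).map ofReal μ = ofReal ∘ ξ μ := rfl
  have hstar : star ((of ξ).map ofReal ν) = ofReal ∘ ξ ν := by ext; simp
  rw [Matrix.add_apply, Matrix.smul_apply, mul_mul_conjTranspose_apply, hrow, hstar, add_mulVec,
    dotProduct_add, smul_mulVec, dotProduct_smul, ← ofReal_dotProduct_mulVec,
    ← ofReal_dotProduct_mulVec]
  simp only [gaussianPhaseExponent, of_apply, sub_dotProduct, dotProduct_sub, mulVec_sub, hsymm,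
    smul_eq_mul]
  push_cast
  ring

end Gaussian

theorem stmt_6 {d : ℕ} (V A : Matrix (Fin d) (Fin d) ℝ)
    (hV : V.IsSymm) (hA : Aᵀ = -A) :
    APos A (fun ξ => Complex.exp (-(1 / 4 : ℂ) * ((ξ ⬝ᵥ V.mulVec ξ : ℝ) : ℂ))) ↔
      (V.map (Complex.ofReal) + Complex.I • A.map (Complex.ofReal)).PosSemidef := by
  rw [aPos_gaussian_iff]
  refine ⟨fun h => ?_, fun hM N ξ => ?_⟩
  · refine (isHermitian_map_ofReal_add_I_smul hV hA).posSemidef_of_re_nonneg fun z => ?_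
    obtain ⟨ξ, c, hc, rfl⟩ := exists_sum_eq_zero_conjTranspose_mulVec_eq z
    have key := re_star_dotProduct_mulVec_nonneg_of_posSemidef_map_exp
      (fun t ht => by simpa [gaussianPhaseExponent_sqrt_smul V A ξ ht.le] using h 3 (√t • ξ)) hc
    rw [gaussianPhaseExponent_eq V A hV, star_dotProduct_add_add_mulVec_of_sum_eq_zero _ _ hc,
      smul_mulVec, dotProduct_smul, star_dotProduct_mul_mul_conjTranspose_mulVec] at key
    simpa using key
  · rw [gaussianPhaseExponent_eq V A hV]
    exact ((hM.mul_mul_conjTranspose_same _).smul (by positivity)).map_exp_add_add _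
end

section
/- Let A and B be real skew-symmetric d×d matrices, let f : ℝ^d → ℂ be A-positive and g : ℝ^d → ℂ be B-positive. Then the pointwise product f·g : ℝ^d → ℂ is (A+B)-positive. -/
open scoped ComplexOrder Matrix

theorem stmt_7_general {d : ℕ} (A B : Matrix (Fin d) (Fin d) ℝ)
    (f g : (Fin d → ℝ) → ℂ) (hf : APos A f) (hg : APos B g) :
    APos (A + B) (fun ξ => f ξ * g ξ) := by
  intro N ξ
  -- The phase is multiplicative in the matrix, so the `(A + B)`-kernel of `f * g` is the
  -- Hadamard product of the two kernels; conclude by the Schur product theorem.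
  refine Eq.mpr (congrArg Matrix.PosSemidef ?_) ((hf N ξ).hadamard (hg N ξ))
  ext μ ν
  simp only [Matrix.of_apply, Matrix.hadamard_apply, Matrix.add_mulVec, dotProduct_add,
    Complex.ofReal_add, mul_add, Complex.exp_add]
  ring

theorem stmt_7 {d : ℕ} (A B : Matrix (Fin d) (Fin d) ℝ)
    (hA : Aᵀ = -A) (hB : Bᵀ = -B)
    (f g : (Fin d → ℝ) → ℂ) (hf : APos A f) (hg : APos B g) :
    APos (A + B) (fun ξ => f ξ * g ξ) :=
  stmt_7_general A B f g hf hg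
end

section
/- Let S be a real skew-symmetric d×d matrix and let ‖S‖ denote its operator (spectral) norm. Then the Gaussian function g : ℝ^d → ℂ defined by g(ξ) = exp(−(1/4) · ‖S‖ · ξᵀξ) is S-positive; equivalently, the complex d×d matrix ‖S‖·I + i·S is positive semidefinite. -/
open scoped ComplexOrder Matrix

/-- The operator (spectral) norm of a real matrix, i.e. the norm of the induced linear map
between Euclidean spaces. -/
noncomputable def matrixOpNorm {d : ℕ} (S : Matrix (Fin d) (Fin d) ℝ) : ℝ :=
  ‖LinearMap.toContinuousLinearMap (Matrix.toEuclideanLin S)‖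

open Matrix
open scoped Nat

/-! With `c = ‖S‖`, the kernel entry `exp (-c |ξ_μ - ξ_ν|² / 4) * exp (i ξ_μᵀ S ξ_ν / 2)` factors as
`d_μ * exp (G μ ν) * conj d_ν` with `d_μ = exp (-c |ξ_μ|² / 4)` and `G = ½ Vᴴ (c I + i S) V`, where
the columns of `V` are the `ξ_μ`. So it suffices that `c I + i S` is positive semidefinite (then so
is `G`) and that entrywise exponentials preserve positive semidefiniteness, which follows from the
Schur product theorem since `exp` is a series with nonnegative coefficients. On `x = a + i b` the
quadratic form of `c I + i S` is `c (|a|² + |b|²) - 2 aᵀ S b`, which is nonnegative because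
`aᵀ S b ≤ ‖S‖ |a| |b|`. -/

namespace Matrix

variable {n 𝕜 : Type*} [Fintype n] [RCLike 𝕜]

theorem PosSemidef.of_hasSum {ι : Type*} {A : ι → Matrix n n 𝕜} {B : Matrix n n 𝕜}
    (hA : ∀ k, (A k).PosSemidef) (hB : HasSum A B) : B.PosSemidef := by
  refine posSemidef_iff_dotProduct_mulVec.mpr ⟨?_, fun x => ?_⟩
  · have hstar : HasSum A Bᴴ := by
      simpa only [star_eq_conjTranspose, (hA _).isHermitian.eq] using hB.star
    exact hstar.unique hB
  · let q : Matrix n n 𝕜 →+ 𝕜 :=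
      { toFun := fun M => star x ⬝ᵥ M *ᵥ x
        map_zero' := by simp
        map_add' := fun M M' => by simp [add_mulVec, dotProduct_add] }
    have hq : Continuous q := by
      show Continuous fun M : Matrix n n 𝕜 => star x ⬝ᵥ M *ᵥ x
      fun_prop
    exact (hB.map q hq).nonneg fun k => (hA k).dotProduct_mulVec_nonneg x

theorem PosSemidef.map_pow_s9 {A : Matrix n n 𝕜} (hA : A.PosSemidef) (k : ℕ) :
    (A.map (· ^ k)).PosSemidef := by
  induction k with
  | zero =>
    have h : A.map (· ^ 0) = vecMulVec 1 (star 1) := by ext; simp [vecMulVec]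
    exact h ▸ posSemidef_vecMulVec_self_star 1
  | succ k ih =>
    have h : A.map (· ^ (k + 1)) = A ⊙ A.map (· ^ k) := by ext; simp [pow_succ']
    exact h ▸ hA.hadamard ih

theorem PosSemidef.map_exp_s9 {A : Matrix n n ℂ} (hA : A.PosSemidef) :
    (A.map Complex.exp).PosSemidef := by
  refine PosSemidef.of_hasSum (A := fun k => ((k ! : ℝ)⁻¹ : ℂ) • A.map (· ^ k))
    (fun k => (hA.map_pow_s9 k).smul (by positivity)) ?_
  refine Pi.hasSum.mpr fun i => Pi.hasSum.mpr fun j => ?_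
  simpa [Complex.exp_eq_exp_ℂ, div_eq_inv_mul] using NormedSpace.expSeries_div_hasSum_exp (A i j)

variable {R : Type*} [CommRing R] {S : Matrix n n R}

theorem dotProduct_mulVec_swap_of_transpose_eq_neg (hS : Sᵀ = -S) (u v : n → R) :
    v ⬝ᵥ S *ᵥ u = -(u ⬝ᵥ S *ᵥ v) := by
  rw [← dotProduct_transpose_mulVec, hS, neg_mulVec, dotProduct_neg]

theorem dotProduct_mulVec_self_of_transpose_eq_neg [NoZeroDivisors R] [CharZero R]
    (hS : Sᵀ = -S) (u : n → R) : u ⬝ᵥ S *ᵥ u = 0 :=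
  CharZero.eq_neg_self_iff.mp (dotProduct_mulVec_swap_of_transpose_eq_neg hS u u)

end Matrix

section ComplexifiedRealMatrix

variable {m : Type*} [Fintype m]

theorem ofReal_comp_dotProduct (u v : m → ℝ) :
    (Complex.ofReal ∘ u) ⬝ᵥ (Complex.ofReal ∘ v) = (u ⬝ᵥ v : ℝ) := by
  simp [dotProduct]

theorem ofReal_comp_dotProduct_mulVec (S : Matrix m m ℝ) (u v : m → ℝ) :
    (Complex.ofReal ∘ u) ⬝ᵥ S.map Complex.ofReal *ᵥ (Complex.ofReal ∘ v)
      = (u ⬝ᵥ S *ᵥ v : ℝ) := by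
  simp [dotProduct, mulVec, Finset.mul_sum]

omit [Fintype m] in
theorem exists_eq_ofReal_comp_add_I_smul (x : m → ℂ) :
    ∃ a b : m → ℝ, x = Complex.ofReal ∘ a + Complex.I • Complex.ofReal ∘ b :=
  ⟨fun i => (x i).re, fun i => (x i).im, funext fun i => by simp [Complex.ext_iff]⟩

omit [Fintype m] in
theorem star_ofReal_comp_add_I_smul (a b : m → ℝ) :
    star (Complex.ofReal ∘ a + Complex.I • Complex.ofReal ∘ b)
      = Complex.ofReal ∘ a - Complex.I • Complex.ofReal ∘ b := by
  ext i
  simp [Complex.ext_iff]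

theorem star_dotProduct_ofReal_comp_add_I_smul {x : m → ℂ} {a b : m → ℝ}
    (hx : x = Complex.ofReal ∘ a + Complex.I • Complex.ofReal ∘ b) :
    star x ⬝ᵥ x = (a ⬝ᵥ a + b ⬝ᵥ b : ℝ) := by
  simp only [hx, star_ofReal_comp_add_I_smul, sub_dotProduct, dotProduct_add, dotProduct_smul,
    smul_dotProduct, ofReal_comp_dotProduct, smul_eq_mul, dotProduct_comm b a]
  push_cast
  ring_nf
  rw [Complex.I_sq]
  ring

theorem star_dotProduct_I_smul_mulVec_of_transpose_eq_neg {S : Matrix m m ℝ} (hS : Sᵀ = -S)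
    {x : m → ℂ} {a b : m → ℝ} (hx : x = Complex.ofReal ∘ a + Complex.I • Complex.ofReal ∘ b) :
    star x ⬝ᵥ (Complex.I • S.map Complex.ofReal) *ᵥ x = (-2 * (a ⬝ᵥ S *ᵥ b) : ℝ) := by
  simp only [hx, star_ofReal_comp_add_I_smul, smul_mulVec, mulVec_add, mulVec_smul,
    dotProduct_add, sub_dotProduct, dotProduct_smul, smul_dotProduct,
    ofReal_comp_dotProduct_mulVec, smul_eq_mul, dotProduct_mulVec_self_of_transpose_eq_neg hS,
    dotProduct_mulVec_swap_of_transpose_eq_neg hS a b]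
  push_cast
  ring_nf
  rw [Complex.I_sq]
  ring

theorem posSemidef_smul_one_add_I_smul_map_ofReal [DecidableEq m] {S : Matrix m m ℝ}
    (hS : Sᵀ = -S) {c : ℝ} (hc : ∀ a b : m → ℝ, 2 * (a ⬝ᵥ S *ᵥ b) ≤ c * (a ⬝ᵥ a + b ⬝ᵥ b)) :
    ((c : ℂ) • (1 : Matrix m m ℂ) + Complex.I • S.map Complex.ofReal).PosSemidef := by
  refine posSemidef_iff_dotProduct_mulVec.mpr ⟨?_, fun x => ?_⟩
  · have hSH : (S.map Complex.ofReal)ᴴ = -S.map Complex.ofReal := by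
      rw [← conjTranspose_map _ fun r => (Complex.conj_ofReal r).symm,
        conjTranspose_eq_transpose_of_trivial, hS, Matrix.map_neg _ Complex.ofReal_neg]
    simp only [IsHermitian, conjTranspose_add, conjTranspose_smul, conjTranspose_one,
      Complex.star_def, Complex.conj_ofReal, Complex.conj_I, hSH, smul_neg, neg_smul, neg_neg]
  · obtain ⟨a, b, hx⟩ := exists_eq_ofReal_comp_add_I_smul x
    rw [add_mulVec, smul_mulVec, one_mulVec, dotProduct_add, dotProduct_smul,
      star_dotProduct_ofReal_comp_add_I_smul hx,
      star_dotProduct_I_smul_mulVec_of_transpose_eq_neg hS hx, smul_eq_mul,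
      ← Complex.ofReal_mul, ← Complex.ofReal_add, Complex.zero_le_real]
    linarith [hc a b]

theorem conjTranspose_mul_mul_ofReal_apply {N : Type*} (M : Matrix m m ℂ) (ξ : N → m → ℝ)
    (μ ν : N) :
    ((of fun i μ => (ξ μ i : ℂ))ᴴ * M * of fun i μ => (ξ μ i : ℂ)) μ ν
      = (Complex.ofReal ∘ ξ μ) ⬝ᵥ M *ᵥ (Complex.ofReal ∘ ξ ν) := by
  simp only [mul_apply, dotProduct, mulVec, conjTranspose_apply, of_apply, Complex.star_def,
    Complex.conj_ofReal, Function.comp_apply, Finset.mul_sum, Finset.sum_mul, mul_assoc]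
  exact Finset.sum_comm

end ComplexifiedRealMatrix

open WithLp in
theorem norm_toLp_two_sq {m : Type*} [Fintype m] (v : m → ℝ) : ‖toLp 2 v‖ ^ 2 = v ⬝ᵥ v := by
  rw [← real_inner_self_eq_norm_sq, EuclideanSpace.inner_toLp_toLp, star_trivial]

open WithLp in
theorem two_mul_dotProduct_mulVec_le_matrixOpNorm {d : ℕ} (S : Matrix (Fin d) (Fin d) ℝ)
    (a b : Fin d → ℝ) : 2 * (a ⬝ᵥ S *ᵥ b) ≤ matrixOpNorm S * (a ⬝ᵥ a + b ⬝ᵥ b) := by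
  have hinner : a ⬝ᵥ S *ᵥ b = inner ℝ (toLp 2 a) (toEuclideanLin S (toLp 2 b)) := by
    change _ = inner ℝ (toLp 2 a) (toLp 2 (S *ᵥ b))
    rw [EuclideanSpace.inner_toLp_toLp, star_trivial, dotProduct_comm]
  have hbound : a ⬝ᵥ S *ᵥ b ≤ ‖toLp 2 a‖ * (matrixOpNorm S * ‖toLp 2 b‖) :=
    hinner ▸ (real_inner_le_norm _ _).trans (mul_le_mul_of_nonneg_left
      ((LinearMap.toContinuousLinearMap (toEuclideanLin S)).le_opNorm _) (norm_nonneg _))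
  have hAMGM : 0 ≤ matrixOpNorm S * (‖toLp 2 a‖ - ‖toLp 2 b‖) ^ 2 :=
    mul_nonneg (norm_nonneg _) (sq_nonneg _)
  rw [← norm_toLp_two_sq a, ← norm_toLp_two_sq b]
  nlinarith

theorem aPos_gaussian_of_posSemidef {d : ℕ} {S : Matrix (Fin d) (Fin d) ℝ} {c : ℝ}
    (hM : ((c : ℂ) • (1 : Matrix (Fin d) (Fin d) ℂ) + Complex.I • S.map Complex.ofReal).PosSemidef) :
    APos S (fun ξ => Complex.exp (-(1 / 4 : ℂ) * (c : ℂ) * ((ξ ⬝ᵥ ξ : ℝ) : ℂ))) := by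
  intro N ξ
  set V : Matrix (Fin d) (Fin N) ℂ := of fun i μ => (ξ μ i : ℂ) with hV
  have hG := ((hM.conjTranspose_mul_mul_same V).smul (a := (1 / 2 : ℂ)) (by positivity)).map_exp_s9
  convert hG.mul_mul_conjTranspose_same
    (diagonal fun μ => (Real.exp (-(c / 4) * (ξ μ ⬝ᵥ ξ μ)) : ℂ)) using 1
  ext μ ν
  rw [diagonal_conjTranspose, mul_diagonal, diagonal_mul]
  simp only [Pi.star_apply, Complex.star_def, Complex.conj_ofReal]
  simp only [of_apply, map_apply, Matrix.smul_apply, hV, conjTranspose_mul_mul_ofReal_apply,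
    add_mulVec, smul_mulVec, one_mulVec, dotProduct_add, dotProduct_smul, ofReal_comp_dotProduct,
    ofReal_comp_dotProduct_mulVec, Complex.ofReal_exp, smul_eq_mul, ← Complex.exp_add]
  congr 1
  rw [sub_dotProduct, dotProduct_sub, dotProduct_sub, dotProduct_comm (ξ ν) (ξ μ)]
  push_cast
  ring

theorem stmt_9 {d : ℕ} (S : Matrix (Fin d) (Fin d) ℝ) (hS : Sᵀ = -S) :
    APos S (fun ξ => Complex.exp (-(1 / 4 : ℂ) * (matrixOpNorm S : ℂ) * ((ξ ⬝ᵥ ξ : ℝ) : ℂ))) ∧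
      ((matrixOpNorm S : ℂ) • (1 : Matrix (Fin d) (Fin d) ℂ)
          + Complex.I • S.map (Complex.ofReal)).PosSemidef := by
  have hM := posSemidef_smul_one_add_I_smul_map_ofReal hS
    (two_mul_dotProduct_mulVec_le_matrixOpNorm S)
  exact ⟨aPos_gaussian_of_posSemidef hM, hM⟩
end

section
/- Let A be a real skew-symmetric d×d matrix, B a real skew-symmetric e×e matrix, M a real d×e matrix, and W a real symmetric e×e matrix such that the complex e×e matrix W + i·(B − MᵀAM) is positive semidefinite. If f : ℝ^d → ℂ is A-positive, then the function h : ℝ^e → ℂ defined by h(η) = f(Mη) · exp(−(1/4) · ηᵀ W η) is B-positive. -/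
/-! The twisted kernel of `h` at `η₁, …, η_N` is the entrywise (Hadamard) product of three
matrices: the twisted kernel of `f` at `Mη₁, …, Mη_N`; the entrywise exponential of
`½ η_μᵀ (W + i (B - MᵀAM)) η_ν`; and the rank-one matrix `g_μ g_ν` with
`g_μ = exp (-¼ η_μᵀ W η_μ)`. The exponents match once `(η_μ - η_ν)ᵀ W (η_μ - η_ν)` is expanded
using `Wᵀ = W`. The middle factor is the entrywise exponential of a Gram matrix of
`W + i (B - MᵀAM)`, which is positive semidefinite because every partial sum of the exponential
series is (Schur product theorem) and the positive semidefinite cone is closed. -/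

open scoped ComplexOrder Matrix

namespace Matrix

section PosSemidef

variable {n 𝕜 : Type*} [Fintype n] [RCLike 𝕜]

theorem isClosed_setOf_posSemidef : IsClosed {M : Matrix n n 𝕜 | M.PosSemidef} := by
  simp only [posSemidef_iff_dotProduct_mulVec, Set.ofPred_and, Set.ofPred_forall]
  refine .inter (isClosed_eq (by fun_prop) continuous_id) (isClosed_iInter fun x => ?_)
  exact isClosed_le continuous_const (by fun_prop)

theorem PosSemidef.map_pow_s10 {S : Matrix n n 𝕜} (hS : S.PosSemidef) (k : ℕ) :
    (S.map (· ^ k)).PosSemidef := by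
  induction k with
  | zero => simpa [vecMulVec, Matrix.map] using posSemidef_vecMulVec_self_star (1 : n → 𝕜)
  | succ k ih =>
    convert ih.hadamard hS using 1
    ext
    simp [pow_succ]

end PosSemidef

theorem PosSemidef.map_exp_s10 {n : Type*} [Fintype n] {S : Matrix n n ℂ} (hS : S.PosSemidef) :
    (S.map Complex.exp).PosSemidef := by
  have hsum : HasSum (fun k => (k.factorial : ℝ)⁻¹ • S.map (· ^ k)) (S.map Complex.exp) :=
    Pi.hasSum.2 fun i => Pi.hasSum.2 fun j => by
      simpa [Complex.exp_eq_exp_ℂ, div_eq_inv_mul, Complex.real_smul]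
        using NormedSpace.expSeries_div_hasSum_exp (S i j)
  refine isClosed_setOf_posSemidef.mem_of_tendsto hsum.tendsto_sum_nat
    (.of_forall fun _ => posSemidef_sum _ fun k _ => (hS.map_pow_s10 k).smul ?_)
  positivity

theorem IsSymm.sub_dotProduct_mulVec_sub {m R : Type*} [Fintype m] [CommRing R]
    {W : Matrix m m R} (hW : W.IsSymm) (u v : m → R) :
    (u - v) ⬝ᵥ W *ᵥ (u - v) = u ⬝ᵥ W *ᵥ u - 2 * (u ⬝ᵥ W *ᵥ v) + v ⬝ᵥ W *ᵥ v := by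
  have hvu : v ⬝ᵥ W *ᵥ u = u ⬝ᵥ W *ᵥ v := by
    rw [dotProduct_mulVec, ← mulVec_transpose, hW.eq, dotProduct_comm]
  simp only [sub_dotProduct, mulVec_sub, dotProduct_sub, hvu]
  ring

theorem mulVec_dotProduct_mulVec {m n R : Type*} [Fintype m] [Fintype n] [CommSemiring R]
    (M : Matrix m n R) (A : Matrix m m R) (u v : n → R) :
    (M *ᵥ u) ⬝ᵥ A *ᵥ (M *ᵥ v) = u ⬝ᵥ (Mᵀ * A * M) *ᵥ v := by
  rw [dotProduct_mulVec, ← vecMul_transpose, vecMul_vecMul, ← dotProduct_mulVec, mulVec_mulVec]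

theorem mul_mul_transpose_apply {m n R : Type*} [Fintype n] [CommSemiring R]
    (X : Matrix m n R) (S : Matrix n n R) (i j : m) :
    (X * S * Xᵀ) i j = X i ⬝ᵥ S *ᵥ X j := by
  simp only [mul_apply, dotProduct, mulVec, transpose_apply, Finset.sum_mul, Finset.mul_sum]
  rw [Finset.sum_comm]
  exact Finset.sum_congr rfl fun _ _ => Finset.sum_congr rfl fun _ _ => by ring

theorem of_map_ofReal_mul_mul_conjTranspose_apply {m n : Type*} [Fintype n] (x : m → n → ℝ)
    (S : Matrix n n ℝ) (i j : m) :
    ((of x).map Complex.ofReal * S.map Complex.ofReal * ((of x).map Complex.ofReal)ᴴ) i j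
      = ((x i ⬝ᵥ S *ᵥ x j : ℝ) : ℂ) := by
  have hXH : ((of x).map Complex.ofReal)ᴴ = (of x)ᵀ.map Complex.ofRealHom := by ext; simp
  rw [hXH]
  change ((of x).map Complex.ofRealHom * S.map Complex.ofRealHom * (of x)ᵀ.map Complex.ofRealHom :
    Matrix m m ℂ) i j = _
  rw [← Matrix.map_mul, ← Matrix.map_mul, map_apply, Complex.ofRealHom_eq_coe,
    mul_mul_transpose_apply]
  rfl

end Matrix

open Matrix

theorem stmt_10_general {d e : ℕ} (A : Matrix (Fin d) (Fin d) ℝ)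
    (B : Matrix (Fin e) (Fin e) ℝ)
    (M : Matrix (Fin d) (Fin e) ℝ)
    (W : Matrix (Fin e) (Fin e) ℝ) (hW : W.IsSymm)
    (hPSD : (W.map (Complex.ofReal)
        + Complex.I • (B - Mᵀ * A * M).map (Complex.ofReal)).PosSemidef)
    (f : (Fin d → ℝ) → ℂ) (hf : APos A f) :
    APos B (fun η =>
      f (M.mulVec η) * Complex.exp (-(1 / 4 : ℂ) * ((η ⬝ᵥ W.mulVec η : ℝ) : ℂ))) := by
  intro N η
  set X : Matrix (Fin N) (Fin e) ℂ := (of η).map Complex.ofReal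
  set g : Fin N → ℂ := fun μ => Complex.exp (-(1 / 4 : ℂ) * ((η μ ⬝ᵥ W *ᵥ η μ : ℝ) : ℂ))
  have hE := ((hPSD.mul_mul_conjTranspose_same X).smul (by norm_num : (0 : ℝ) ≤ 2⁻¹)).map_exp_s10
  have hprod :=
    ((hf N fun μ => M *ᵥ η μ).hadamard hE).hadamard (posSemidef_vecMulVec_self_star g)
  -- `hprod` uses `RCLike`'s order on `ℂ`, the goal `ComplexOrder`'s: equal only after unfolding.
  refine (congrArg PosSemidef (ext fun μ ν => ?_)).mp hprod
  simp only [of_apply, hadamard_apply, map_apply, Matrix.smul_apply, Matrix.mul_add,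
    Matrix.add_mul, Matrix.mul_smul, Matrix.smul_mul, X, of_map_ofReal_mul_mul_conjTranspose_apply,
    Matrix.add_apply, vecMulVec_apply, g, Pi.star_apply, Complex.real_smul, smul_eq_mul,
    hW.sub_dotProduct_mulVec_sub]
  rw [mulVec_sub, Complex.star_def, ← Complex.exp_conj]
  simp only [map_mul, map_neg, map_div₀, map_one, map_ofNat, Complex.conj_ofReal, mul_assoc,
    ← Complex.exp_add]
  congr 2
  rw [mulVec_dotProduct_mulVec, sub_mulVec, dotProduct_sub]
  push_cast
  ring

theorem stmt_10 {d e : ℕ} (A : Matrix (Fin d) (Fin d) ℝ) (hA : Aᵀ = -A)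
    (B : Matrix (Fin e) (Fin e) ℝ) (hB : Bᵀ = -B)
    (M : Matrix (Fin d) (Fin e) ℝ)
    (W : Matrix (Fin e) (Fin e) ℝ) (hW : W.IsSymm)
    (hPSD : (W.map (Complex.ofReal)
        + Complex.I • (B - Mᵀ * A * M).map (Complex.ofReal)).PosSemidef)
    (f : (Fin d → ℝ) → ℂ) (hf : APos A f) :
    APos B (fun η =>
      f (M.mulVec η) * Complex.exp (-(1 / 4 : ℂ) * ((η ⬝ᵥ W.mulVec η : ℝ) : ℂ))) :=
  stmt_10_general A B M W hW hPSD f hf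
end

section
/- Let p ≥ 1 be a natural number, M a real number, and f : ℝ^p → ℂ an integrable function satisfying |f(ξ)| ≤ M for all ξ ∈ ℝ^p. Then the limit as L → ∞ (over positive reals L) of (1/L^p) · ∫∫ f(ξ₁ − ξ₂) dξ₁ dξ₂, where both ξ₁ and ξ₂ range over the cube [−L/2, L/2]^p, equals ∫_{ℝ^p} f(ξ) dξ. -/
/-!
Substituting `η = ξ₁ - ξ₂` and applying Fubini turns the double integral over a set `C` into
`∫ |C ∩ (C + η)| f(η) dη`. For the cube of side `L` the overlap volume is `∏ᵢ (L - |ηᵢ|)₊`, so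
after dividing by `L^p` the integrand is `f` weighted by the tent function `∏ᵢ (1 - |ηᵢ|/L)₊`,
which lies in `[0, 1]` and tends to `1` pointwise; dominated convergence gives the limit.
-/

open MeasureTheory Set Filter Topology

section Autocorrelation

variable {G E : Type*} [MeasurableSpace G] [AddCommGroup G] [MeasurableAdd₂ G] [MeasurableNeg G]
  {μ : Measure G} [μ.IsAddLeftInvariant] [μ.IsNegInvariant]
  [NormedAddCommGroup E] [NormedSpace ℝ E]

theorem setIntegral_comp_sub_eq_integral_indicator (f : G → E) {s : Set G} (hs : MeasurableSet s)
    (x : G) :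
    ∫ y in s, f (x - y) ∂μ = ∫ η, ((fun η => x - η) ⁻¹' s).indicator f η ∂μ := by
  rw [← integral_indicator hs, ← integral_sub_left_eq_self _ μ x]
  congr 1 with η
  simp only [indicator, sub_sub_cancel]
  rfl

theorem setIntegral_setIntegral_comp_sub [SFinite μ] [CompleteSpace E] {f : G → E}
    (hf : Integrable f μ) {s : Set G} (hs : MeasurableSet s) (hμs : μ s ≠ ⊤) :
    ∫ x in s, ∫ y in s, f (x - y) ∂μ ∂μ = ∫ η, μ.real ((· - η) ⁻¹' s ∩ s) • f η ∂μ := by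
  have : IsFiniteMeasure (μ.restrict s) := isFiniteMeasure_restrict.2 hμs
  have hint : Integrable (fun z : G × G => ((fun z : G × G => z.1 - z.2) ⁻¹' s).indicator
      (fun z => f z.2) z) ((μ.restrict s).prod μ) :=
    (hf.comp_snd _).indicator ((measurable_fst.sub measurable_snd) hs)
  simp_rw [setIntegral_comp_sub_eq_integral_indicator f hs]
  rw [integral_integral_swap hint]
  congr 1 with η
  have hη : MeasurableSet ((· - η) ⁻¹' s) := measurable_sub_const η hs
  rw [← measureReal_restrict_apply hη, ← integral_indicator_const _ hη]
  rfl

end Autocorrelation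

theorem min_add_sub_max_add (a b t : ℝ) : min (b + t) b - max (a + t) a = b - a - |t| := by
  rcases le_total 0 t with ht | ht
  · rw [abs_of_nonneg ht, min_eq_right (by linarith), max_eq_left (by linarith)]
    ring
  · rw [abs_of_nonpos ht, min_eq_left (by linarith), max_eq_right (by linarith)]
    ring

theorem Real.volume_real_preimage_sub_Icc_inter_Icc {ι : Type*} [Fintype ι] (a b η : ι → ℝ) :
    volume.real ((· - η) ⁻¹' Icc a b ∩ Icc a b) = ∏ i, max (b i - a i - |η i|) 0 := by
  rw [preimage_sub_const_Icc, Icc_inter_Icc, measureReal_def, Real.volume_Icc_pi,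
    ENNReal.toReal_prod]
  refine Finset.prod_congr rfl fun i _ => ?_
  rw [ENNReal.toReal_ofReal', Pi.inf_apply, Pi.sup_apply, Pi.add_apply, Pi.add_apply,
    min_add_sub_max_add]

noncomputable def tent (L t : ℝ) : ℝ := max (1 - |t| / L) 0

theorem tent_nonneg (L t : ℝ) : 0 ≤ tent L t := le_max_right _ _

theorem tent_le_one {L : ℝ} (hL : 0 ≤ L) (t : ℝ) : tent L t ≤ 1 :=
  max_le (sub_le_self _ (div_nonneg (abs_nonneg t) hL)) zero_le_one

@[fun_prop]
theorem continuous_tent (L : ℝ) : Continuous (tent L) := by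
  unfold tent; fun_prop

theorem tendsto_tent_atTop (t : ℝ) : Tendsto (fun L : ℝ => tent L t) atTop (𝓝 1) := by
  have h : Tendsto (fun L : ℝ => 1 - |t| / L) atTop (𝓝 1) := by
    simpa using tendsto_const_nhds.sub ((tendsto_const_nhds (x := |t|)).div_atTop tendsto_id)
  simpa [tent] using h.max (tendsto_const_nhds (x := (0 : ℝ)))

theorem mul_tent {L : ℝ} (hL : 0 < L) (t : ℝ) : L * tent L t = max (L - |t|) 0 := by
  rw [tent, mul_max_of_nonneg _ _ hL.le, mul_zero, mul_sub, mul_one, mul_div_cancel₀ _ hL.ne']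

theorem volume_real_preimage_sub_cube_inter_cube {ι : Type*} [Fintype ι] {L : ℝ} (hL : 0 < L)
    (η : ι → ℝ) :
    volume.real ((· - η) ⁻¹' Icc (fun _ => -(L / 2)) (fun _ => L / 2) ∩
      Icc (fun _ => -(L / 2)) (fun _ => L / 2)) = L ^ Fintype.card ι * ∏ i, tent L (η i) := by
  have hside : L / 2 - -(L / 2) = L := by ring
  simp only [Real.volume_real_preimage_sub_Icc_inter_Icc, hside, ← mul_tent hL,
    Finset.prod_mul_distrib, Finset.prod_const, Finset.card_univ]

theorem inv_pow_smul_setIntegral_cube_setIntegral_cube_sub {ι E : Type*} [Fintype ι]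
    [NormedAddCommGroup E] [NormedSpace ℝ E] [CompleteSpace E] {f : (ι → ℝ) → E}
    (hf : Integrable f) {L : ℝ} (hL : 0 < L) :
    (L ^ Fintype.card ι)⁻¹ •
        ∫ x in Icc (fun _ => -(L / 2)) (fun _ => L / 2),
          ∫ y in Icc (fun _ => -(L / 2)) (fun _ => L / 2), f (x - y)
      = ∫ η, (∏ i, tent L (η i)) • f η := by
  rw [setIntegral_setIntegral_comp_sub hf measurableSet_Icc isCompact_Icc.measure_lt_top.ne,
    ← integral_smul]
  congr 1 with η
  rw [volume_real_preimage_sub_cube_inter_cube hL, smul_smul,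
    inv_mul_cancel_left₀ (pow_ne_zero _ hL.ne')]

theorem tendsto_integral_prod_tent_smul {ι E : Type*} [Fintype ι] [NormedAddCommGroup E]
    [NormedSpace ℝ E] {μ : Measure (ι → ℝ)} {f : (ι → ℝ) → E} (hf : Integrable f μ) :
    Tendsto (fun L => ∫ η, (∏ i, tent L (η i)) • f η ∂μ) atTop (𝓝 (∫ η, f η ∂μ)) := by
  refine tendsto_integral_filter_of_dominated_convergence (fun η => ‖f η‖) ?_ ?_ hf.norm ?_
  · refine .of_forall fun L => (Continuous.aestronglyMeasurable ?_).smul hf.1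
    fun_prop
  · filter_upwards [eventually_ge_atTop 0] with L hL
    refine .of_forall fun η => ?_
    rw [norm_smul, Real.norm_of_nonneg (Finset.prod_nonneg fun i _ => tent_nonneg _ _)]
    exact mul_le_of_le_one_left (norm_nonneg _)
      (Finset.prod_le_one (fun i _ => tent_nonneg _ _) fun i _ => tent_le_one hL _)
  · refine .of_forall fun η => ?_
    simpa using
      (tendsto_finsetProd Finset.univ fun i _ => tendsto_tent_atTop (η i)).smul_const (f η)

theorem stmt_11_general (p : ℕ) (f : (Fin p → ℝ) → ℂ)
    (hf : Integrable f) :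
    Filter.Tendsto
      (fun L : ℝ =>
        (1 / (L : ℂ) ^ p) *
          ∫ ξ₁ in Set.Icc (fun _ : Fin p => -(L / 2)) (fun _ : Fin p => L / 2),
            ∫ ξ₂ in Set.Icc (fun _ : Fin p => -(L / 2)) (fun _ : Fin p => L / 2),
              f (ξ₁ - ξ₂))
      Filter.atTop (nhds (∫ ξ, f ξ)) := by
  refine (tendsto_integral_prod_tent_smul hf).congr' ?_
  filter_upwards [eventually_gt_atTop 0] with L hL
  rw [← inv_pow_smul_setIntegral_cube_setIntegral_cube_sub hf hL, Fintype.card_fin,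
    Complex.real_smul]
  push_cast
  ring

theorem stmt_11 (p : ℕ) (hp : 1 ≤ p) (M : ℝ) (f : (Fin p → ℝ) → ℂ)
    (hf : Integrable f)
    (hbd : ∀ ξ : Fin p → ℝ, ‖f ξ‖ ≤ M) :
    Filter.Tendsto
      (fun L : ℝ =>
        (1 / (L : ℂ) ^ p) *
          ∫ ξ₁ in Set.Icc (fun _ : Fin p => -(L / 2)) (fun _ : Fin p => L / 2),
            ∫ ξ₂ in Set.Icc (fun _ : Fin p => -(L / 2)) (fun _ : Fin p => L / 2),
              f (ξ₁ - ξ₂))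
      Filter.atTop (nhds (∫ ξ, f ξ)) :=
  stmt_11_general p f hf
end
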